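/- If a linear code C over F_q is obtained from codes C₁ and C₂ of equal length by the (u, u+v) construction, then R_t(C) ≤ R_t(C₁) + R_t(C₂) for every t ∈ ℕ. Consequently, for Reed-Muller codes, R_t(r,m) ≤ R_t(r−1,m−1) + R_t(r,m−1) for all m,t ∈ ℕ and 1 ≤ r ≤ m−1. -/

import Mathlib

/-!
Split a received word `w = (w₁, w₂)` of length `2n` into its halves. Cover `w₁` by some `u` from
`C₁` within `R_t(C₁)`, then cover the difference `w₂ - u` by some `v` from `C₂` within `R_t(C₂)`;
the codeword `(u, u + v)` differs from `w` on the union of the two supports, so it lies within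
`R_t(C₁) + R_t(C₂)` of `w`. For Reed–Muller codes, writing the first variable apart, the polynomial
`p(x') + x₀ q(x')` with `deg p ≤ r`, `deg q ≤ r - 1` shows that, up to a permutation of coordinates,
`RM(r, m)` contains the `(u, u + v)` code of `RM(r, m - 1)` and `RM(r - 1, m - 1)`; a larger code has
smaller covering radii, and permuting coordinates does not change them.
-/

open Classical in
noncomputable def tWeight {ι F : Type*} [Fintype ι] [Zero F] {t : ℕ} (v : Fin t → ι → F) : ℕ :=
  (Finset.univ.filter fun j : ι => ∃ i, v i j ≠ (0 : F)).card

noncomputable def genCovDist {ι F : Type*} [Fintype ι] [AddGroup F] {t : ℕ} (v c : Fin t → ι → F) : ℕ :=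
  tWeight (v - c)

noncomputable def genCovRadius {ι F : Type*} [Fintype ι] [AddGroup F] (C : Set (ι → F)) (t : ℕ) : ℕ :=
  sInf {r : ℕ | ∀ v : Fin t → ι → F, ∃ c : Fin t → ι → F, (∀ i, c i ∈ C) ∧ genCovDist v c ≤ r}

def RM (r m : ℕ) : Set ((Fin m → ZMod 2) → ZMod 2) :=
  {f | ∃ p : MvPolynomial (Fin m) (ZMod 2), p.totalDegree ≤ r ∧ ∀ x, MvPolynomial.eval x p = f x}

section tWeight

variable {ι κ F : Type*} [Zero F] {t : ℕ}

lemma tWeight_le_card [Fintype ι] (v : Fin t → ι → F) : tWeight v ≤ Fintype.card ι := by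
  classical
  exact Finset.card_filter_le _ _

lemma tWeight_comp_equiv [Fintype ι] [Fintype κ] (e : ι ≃ κ) (w : Fin t → κ → F) :
    tWeight (fun i => w i ∘ e) = tWeight w := by
  classical
  unfold tWeight
  exact Finset.card_equiv e (by simp)

lemma tWeight_sum [Fintype κ] (w : Fin t → κ ⊕ κ → F) :
    tWeight w = tWeight (fun i => w i ∘ Sum.inl) + tWeight (fun i => w i ∘ Sum.inr) := by
  classical
  unfold tWeight
  rw [← Finset.card_disjSum]
  congr 1
  ext (a | b) <;> simp

end tWeight

section genCovRadius

variable {ι κ F : Type*} [Fintype ι] [Fintype κ] {t r : ℕ}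

lemma genCovRadius_le [AddGroup F] {C : Set (ι → F)}
    (h : ∀ v : Fin t → ι → F, ∃ c : Fin t → ι → F, (∀ i, c i ∈ C) ∧ genCovDist v c ≤ r) :
    genCovRadius C t ≤ r :=
  Nat.sInf_le h

lemma exists_genCovDist_le_genCovRadius [AddGroup F] {C : Set (ι → F)} (hC : C.Nonempty)
    (v : Fin t → ι → F) :
    ∃ c : Fin t → ι → F, (∀ i, c i ∈ C) ∧ genCovDist v c ≤ genCovRadius C t := by
  obtain ⟨c₀, hc₀⟩ := hC
  exact Nat.sInf_mem (s := {r : ℕ | ∀ v : Fin t → ι → F, ∃ c : Fin t → ι → F,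
      (∀ i, c i ∈ C) ∧ genCovDist v c ≤ r})
    ⟨Fintype.card ι, fun v => ⟨fun _ => c₀, fun _ => hc₀, tWeight_le_card _⟩⟩ v

lemma genCovRadius_uuv_le [AddCommGroup F] {A B : Set (κ → F)} (hA : A.Nonempty)
    (hB : B.Nonempty) (t : ℕ) :
    genCovRadius {w : κ ⊕ κ → F | ∃ u ∈ A, ∃ v ∈ B, w = Sum.elim u (u + v)} t
      ≤ genCovRadius A t + genCovRadius B t := by
  refine genCovRadius_le fun w => ?_
  obtain ⟨u, hu, hdu⟩ := exists_genCovDist_le_genCovRadius hA fun i => w i ∘ Sum.inl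
  obtain ⟨v, hv, hdv⟩ := exists_genCovDist_le_genCovRadius hB ((fun i => w i ∘ Sum.inr) - u)
  refine ⟨fun i => Sum.elim (u i) (u i + v i), fun i => ⟨u i, hu i, v i, hv i, rfl⟩, ?_⟩
  have hsplit : genCovDist w (fun i => Sum.elim (u i) (u i + v i))
      = genCovDist (fun i => w i ∘ Sum.inl) u
        + genCovDist ((fun i => w i ∘ Sum.inr) - u) v := by
    unfold genCovDist
    rw [tWeight_sum]
    congr 2
    ext i a
    simp [sub_add_eq_sub_sub]
  exact hsplit ▸ Nat.add_le_add hdu hdv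

lemma genCovRadius_le_of_comp_equiv_mem [AddGroup F] {C : Set (ι → F)} {D : Set (κ → F)}
    (e : ι ≃ κ) (hD : D.Nonempty) (h : ∀ f ∈ D, f ∘ e ∈ C) (t : ℕ) :
    genCovRadius C t ≤ genCovRadius D t := by
  refine genCovRadius_le fun v => ?_
  obtain ⟨c, hc, hd⟩ := exists_genCovDist_le_genCovRadius hD fun i => v i ∘ e.symm
  refine ⟨fun i => c i ∘ e, fun i => h _ (hc i), ?_⟩
  unfold genCovDist at hd ⊢
  rw [← tWeight_comp_equiv e] at hd
  convert hd using 3 with i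
  ext x
  simp

end genCovRadius

section ReedMuller

lemma zero_mem_RM (r m : ℕ) : (0 : (Fin m → ZMod 2) → ZMod 2) ∈ RM r m :=
  ⟨0, by simp, by simp⟩

def splitEquiv (k : ℕ) : (Fin (k + 1) → ZMod 2) ≃ (Fin k → ZMod 2) ⊕ (Fin k → ZMod 2) :=
  (Fin.consEquiv fun _ => ZMod 2).symm.trans
    (((finTwoEquiv : ZMod 2 ≃ Bool).prodCongr (Equiv.refl _)).trans (Equiv.boolProdEquivSum _))

lemma splitEquiv_apply {k : ℕ} (x : Fin (k + 1) → ZMod 2) :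
    splitEquiv k x = if x 0 == 1 then .inr (Fin.tail x) else .inl (Fin.tail x) :=
  rfl

lemma sumElim_splitEquiv {k : ℕ} (u v : (Fin k → ZMod 2) → ZMod 2) (x : Fin (k + 1) → ZMod 2) :
    Sum.elim u (u + v) (splitEquiv k x) = u (Fin.tail x) + x 0 * v (Fin.tail x) := by
  obtain h | h : x 0 = 0 ∨ x 0 = 1 := by generalize x 0 = a; revert a; decide
  all_goals simp [splitEquiv_apply, h]

open MvPolynomial in
lemma sumElim_comp_splitEquiv_mem_RM {s k : ℕ} {u v : (Fin k → ZMod 2) → ZMod 2}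
    (hu : u ∈ RM (s + 1) k) (hv : v ∈ RM s k) :
    Sum.elim u (u + v) ∘ splitEquiv k ∈ RM (s + 1) (k + 1) := by
  obtain ⟨p, hp, hpu⟩ := hu
  obtain ⟨q, hq, hqv⟩ := hv
  refine ⟨rename Fin.succ p + X 0 * rename Fin.succ q, ?_, fun x => ?_⟩
  · have hXq : (X 0 * rename Fin.succ q).totalDegree ≤ s + 1 :=
      calc (X 0 * rename Fin.succ q).totalDegree
          ≤ (X 0 : MvPolynomial (Fin (k + 1)) (ZMod 2)).totalDegree
            + (rename Fin.succ q).totalDegree := totalDegree_mul _ _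
        _ ≤ 1 + s := by
          rw [totalDegree_X]
          exact Nat.add_le_add_left ((totalDegree_rename_le _ _).trans hq) 1
        _ = s + 1 := Nat.add_comm 1 s
    exact (totalDegree_add _ _).trans (max_le ((totalDegree_rename_le _ _).trans hp) hXq)
  · rw [Function.comp_apply, sumElim_splitEquiv, ← hpu, ← hqv]
    simp only [map_add, map_mul, eval_rename, eval_X]
    rfl

lemma genCovRadius_RM_succ_le (s k t : ℕ) :
    genCovRadius (RM (s + 1) (k + 1)) t
      ≤ genCovRadius (RM s k) t + genCovRadius (RM (s + 1) k) t :=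
  calc genCovRadius (RM (s + 1) (k + 1)) t
      ≤ genCovRadius {w : (Fin k → ZMod 2) ⊕ (Fin k → ZMod 2) → ZMod 2 |
          ∃ u ∈ RM (s + 1) k, ∃ v ∈ RM s k, w = Sum.elim u (u + v)} t := by
        refine genCovRadius_le_of_comp_equiv_mem (splitEquiv k) ?_ ?_ t
        · exact ⟨0, 0, zero_mem_RM _ _, 0, zero_mem_RM _ _, by simp⟩
        · rintro _ ⟨u, hu, v, hv, rfl⟩
          exact sumElim_comp_splitEquiv_mem_RM hu hv
    _ ≤ genCovRadius (RM (s + 1) k) t + genCovRadius (RM s k) t :=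
        genCovRadius_uuv_le ⟨0, zero_mem_RM _ _⟩ ⟨0, zero_mem_RM _ _⟩ t
    _ = genCovRadius (RM s k) t + genCovRadius (RM (s + 1) k) t := Nat.add_comm _ _

end ReedMuller

theorem stmt10_general (n : ℕ) (F : Type) [Field F]
    (C₁ C₂ : Submodule F (Fin n → F)) (t : ℕ) :
    genCovRadius {w : Fin n ⊕ Fin n → F | ∃ u ∈ C₁, ∃ v ∈ C₂, w = Sum.elim u (u + v)} t
      ≤ genCovRadius (C₁ : Set (Fin n → F)) t + genCovRadius (C₂ : Set (Fin n → F)) t ∧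
    ∀ r m : ℕ, 1 ≤ r → r ≤ m - 1 →
      genCovRadius (RM r m) t
        ≤ genCovRadius (RM (r - 1) (m - 1)) t + genCovRadius (RM r (m - 1)) t := by
  refine ⟨genCovRadius_uuv_le ⟨0, C₁.zero_mem⟩ ⟨0, C₂.zero_mem⟩ t, fun r m hr hm => ?_⟩
  obtain ⟨s, rfl⟩ : ∃ s, r = s + 1 := ⟨r - 1, by omega⟩
  obtain ⟨k, rfl⟩ : ∃ k, m = k + 1 := ⟨m - 1, by omega⟩
  exact genCovRadius_RM_succ_le s k t

/-- if C is obtained from C₁, C₂ by the (u,u+v) construction then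
R_t(C) ≤ R_t(C₁) + R_t(C₂); consequently for Reed-Muller codes
R_t(r,m) ≤ R_t(r−1,m−1) + R_t(r,m−1) for 1 ≤ r ≤ m−1. -/
theorem stmt10 (q n : ℕ) (F : Type) [Field F] [Fintype F] (hq : Fintype.card F = q)
    (C₁ C₂ : Submodule F (Fin n → F)) (t : ℕ) :
    genCovRadius {w : Fin n ⊕ Fin n → F | ∃ u ∈ C₁, ∃ v ∈ C₂, w = Sum.elim u (u + v)} t
      ≤ genCovRadius (C₁ : Set (Fin n → F)) t + genCovRadius (C₂ : Set (Fin n → F)) t ∧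
    ∀ r m : ℕ, 1 ≤ r → r ≤ m - 1 →
      genCovRadius (RM r m) t
        ≤ genCovRadius (RM (r - 1) (m - 1)) t + genCovRadius (RM r (m - 1)) t :=
  stmt10_general n F C₁ C₂ t
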